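/- Fix l ∈ ℕ₀ and let ψ_{0,l}(ρ) := ρ^{l+1} (1−ρ²)^{−1/2} (2/(1+√(1−ρ²)))^{3/2+l} and ψ_{1,l}(ρ) := ρ^{l+1} (1/((3+2l)√(1−ρ²))) [ (1/(1−√(1−ρ²)))^{3/2+l} − (1/(1+√(1−ρ²)))^{3/2+l} ] for ρ ∈ (0,1). Then their Wronskian satisfies W(ψ_{0,l}, ψ_{1,l})(ρ) := ψ_{0,l}(ρ) ψ_{1,l}'(ρ) − ψ_{0,l}'(ρ) ψ_{1,l}(ρ) = −2^{l+3/2} / (ρ² (1−ρ²)^{3/2}) for all ρ ∈ (0,1). -/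

import Mathlib

/-!
Write `s = √(1 - ρ²)` and `c = 3/2 + l`, so that `3 + 2l = 2c`. Both functions carry the factor
`ρ^{l+1}/s`: `ψ₀ = 2^c (ρ^{l+1}/s) Q` and `ψ₁ = (2c)⁻¹ (ρ^{l+1}/s) (P - Q)` with
`Q = (1/(1+s))^c`, `P = (1/(1-s))^c`. A common factor leaves a Wronskian squared, and
`W(Q, P - Q) = W(Q, P)`. For `c`-th powers, `W(a^c, b^c) = c (ab)^{c-1} W(a, b)`; here
`ab = ρ⁻²` because `(1+s)(1-s) = ρ²`, and `W(1/(1+s), 1/(1-s)) = 2s'/ρ⁴ = -2/(ρ³s)`.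
-/

noncomputable section

/-- `ψ_{0,l}(ρ) = ρ^{l+1} (1−ρ²)^{−1/2} (2/(1+√(1−ρ²)))^{3/2+l}` -/
def psi0 (l : ℕ) (ρ : ℝ) : ℝ :=
  ρ ^ (l + 1) * (1 - ρ ^ 2) ^ (-(1 / 2) : ℝ) *
    (2 / (1 + Real.sqrt (1 - ρ ^ 2))) ^ ((3 : ℝ) / 2 + l)

/-- `ψ_{1,l}(ρ) = ρ^{l+1} (1/((3+2l)√(1−ρ²))) [(1/(1−√(1−ρ²)))^{3/2+l} − (1/(1+√(1−ρ²)))^{3/2+l}]` -/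
def psi1 (l : ℕ) (ρ : ℝ) : ℝ :=
  ρ ^ (l + 1) * (1 / ((3 + 2 * (l : ℝ)) * Real.sqrt (1 - ρ ^ 2))) *
    ((1 / (1 - Real.sqrt (1 - ρ ^ 2))) ^ ((3 : ℝ) / 2 + l) -
      (1 / (1 + Real.sqrt (1 - ρ ^ 2))) ^ ((3 : ℝ) / 2 + l))

open Filter Topology

def wronskian (f g : ℝ → ℝ) (x : ℝ) : ℝ := f x * deriv g x - deriv f x * g x

section Wronskian

variable {f g h : ℝ → ℝ} {x : ℝ}

theorem wronskian_congr {f₁ f₂ g₁ g₂ : ℝ → ℝ} (hf : f₁ =ᶠ[𝓝 x] f₂) (hg : g₁ =ᶠ[𝓝 x] g₂) :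
    wronskian f₁ g₁ x = wronskian f₂ g₂ x := by
  simp only [wronskian, hf.deriv_eq, hg.deriv_eq, hf.eq_of_nhds, hg.eq_of_nhds]

theorem wronskian_const_mul (a b : ℝ) :
    wronskian (fun y => a * f y) (fun y => b * g y) x = a * b * wronskian f g x := by
  simp only [wronskian, deriv_const_mul_field]
  ring

theorem wronskian_mul_left (hh : DifferentiableAt ℝ h x) (hf : DifferentiableAt ℝ f x)
    (hg : DifferentiableAt ℝ g x) :
    wronskian (fun y => h y * f y) (fun y => h y * g y) x = h x ^ 2 * wronskian f g x := by
  simp only [wronskian, deriv_fun_mul hh hf, deriv_fun_mul hh hg]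
  ring

theorem wronskian_sub_self (hf : DifferentiableAt ℝ f x) (hg : DifferentiableAt ℝ g x) :
    wronskian f (fun y => g y - f y) x = wronskian f g x := by
  simp only [wronskian, deriv_fun_sub hg hf]
  ring

theorem wronskian_one_div (hf : DifferentiableAt ℝ f x) (hg : DifferentiableAt ℝ g x)
    (hfx : f x ≠ 0) (hgx : g x ≠ 0) :
    wronskian (fun y => 1 / f y) (fun y => 1 / g y) x = -wronskian f g x / (f x * g x) ^ 2 := by
  simp only [wronskian, one_div, deriv_fun_inv'' hf hfx, deriv_fun_inv'' hg hgx]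
  field_simp
  ring

theorem wronskian_rpow (hf : DifferentiableAt ℝ f x) (hg : DifferentiableAt ℝ g x)
    (hfx : 0 < f x) (hgx : 0 < g x) (c : ℝ) :
    wronskian (fun y => f y ^ c) (fun y => g y ^ c) x
      = c * (f x * g x) ^ (c - 1) * wronskian f g x := by
  simp only [wronskian, (hf.hasDerivAt.rpow_const (p := c) (Or.inl hfx.ne')).deriv,
    (hg.hasDerivAt.rpow_const (p := c) (Or.inl hgx.ne')).deriv,
    Real.mul_rpow hfx.le hgx.le, Real.rpow_sub_one hfx.ne', Real.rpow_sub_one hgx.ne']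
  field_simp

theorem wronskian_one_add_one_sub {S' : ℝ} {S : ℝ → ℝ} (hS : HasDerivAt S S' x) :
    wronskian (fun y => 1 + S y) (fun y => 1 - S y) x = -2 * S' := by
  simp only [wronskian, (hS.const_add 1).deriv, (hS.const_sub 1).deriv]
  ring

end Wronskian

section SqrtOneSubSq

variable {ρ : ℝ}

theorem hasDerivAt_sqrt_one_sub_sq (hρ : ρ ^ 2 < 1) :
    HasDerivAt (fun x => √(1 - x ^ 2)) (-ρ / √(1 - ρ ^ 2)) ρ := by
  convert ((hasDerivAt_pow 2 ρ).const_sub 1).sqrt (by linarith) using 1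
  push_cast
  ring

theorem sqrt_one_sub_sq_lt_one (hρ : ρ ≠ 0) : √(1 - ρ ^ 2) < 1 := by
  rw [Real.sqrt_lt' one_pos]
  have := pow_pos (abs_pos.2 hρ) 2
  rw [sq_abs] at this
  linarith

theorem one_add_sqrt_mul_one_sub_sqrt_eq_sq (hρ : ρ ^ 2 < 1) :
    (1 + √(1 - ρ ^ 2)) * (1 - √(1 - ρ ^ 2)) = ρ ^ 2 := by
  nlinarith [Real.sq_sqrt (by linarith : (0 : ℝ) ≤ 1 - ρ ^ 2)]

theorem differentiableAt_one_div_one_add_sqrt (hρ : ρ ^ 2 < 1) :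
    DifferentiableAt ℝ (fun x => 1 / (1 + √(1 - x ^ 2))) ρ :=
  (differentiableAt_const 1).div ((hasDerivAt_sqrt_one_sub_sq hρ).const_add 1).differentiableAt
    (by positivity)

theorem differentiableAt_one_div_one_sub_sqrt (hρ0 : ρ ≠ 0) (hρ : ρ ^ 2 < 1) :
    DifferentiableAt ℝ (fun x => 1 / (1 - √(1 - x ^ 2))) ρ :=
  (differentiableAt_const 1).div ((hasDerivAt_sqrt_one_sub_sq hρ).const_sub 1).differentiableAt
    (sub_pos.2 (sqrt_one_sub_sq_lt_one hρ0)).ne'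

theorem wronskian_one_div_one_add_one_sub_sqrt (hρ0 : ρ ≠ 0) (hρ : ρ ^ 2 < 1) :
    wronskian (fun x => 1 / (1 + √(1 - x ^ 2))) (fun x => 1 / (1 - √(1 - x ^ 2))) ρ
      = -2 / (ρ ^ 3 * √(1 - ρ ^ 2)) := by
  have hS := hasDerivAt_sqrt_one_sub_sq hρ
  have hprod := one_add_sqrt_mul_one_sub_sqrt_eq_sq hρ
  have hplus : 1 + √(1 - ρ ^ 2) ≠ 0 := by positivity
  have hminus : 1 - √(1 - ρ ^ 2) ≠ 0 := (sub_pos.2 (sqrt_one_sub_sq_lt_one hρ0)).ne'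
  rw [wronskian_one_div (hS.const_add 1).differentiableAt (hS.const_sub 1).differentiableAt
    hplus hminus, wronskian_one_add_one_sub hS, hprod]
  field_simp

theorem wronskian_rpow_one_div_one_add_one_sub_sqrt (l : ℕ) (hρ0 : 0 < ρ) (hρ1 : ρ < 1) :
    wronskian (fun x => (1 / (1 + √(1 - x ^ 2))) ^ ((3 : ℝ) / 2 + l))
      (fun x => (1 / (1 - √(1 - x ^ 2))) ^ ((3 : ℝ) / 2 + l)) ρ
      = -(3 + 2 * l) / (ρ ^ (2 * l + 4) * √(1 - ρ ^ 2)) := by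
  have hρ : ρ ^ 2 < 1 := by nlinarith
  have hminus : 0 < 1 - √(1 - ρ ^ 2) := sub_pos.2 (sqrt_one_sub_sq_lt_one hρ0.ne')
  have hprod : 1 / (1 + √(1 - ρ ^ 2)) * (1 / (1 - √(1 - ρ ^ 2))) = (ρ ^ 2)⁻¹ := by
    rw [div_mul_div_comm, one_mul, one_add_sqrt_mul_one_sub_sqrt_eq_sq hρ, one_div]
  rw [wronskian_rpow (differentiableAt_one_div_one_add_sqrt hρ)
    (differentiableAt_one_div_one_sub_sqrt hρ0.ne' hρ) (by positivity) (by positivity),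
    wronskian_one_div_one_add_one_sub_sqrt hρ0.ne' hρ, hprod,
    Real.inv_rpow (by positivity), ← Real.rpow_natCast_mul hρ0.le,
    show ((2 : ℕ) : ℝ) * ((3 : ℝ) / 2 + l - 1) = ((2 * l + 1 : ℕ) : ℝ) by push_cast; ring,
    Real.rpow_natCast]
  field_simp
  ring

end SqrtOneSubSq

theorem psi0_eq (l : ℕ) {x : ℝ} (hx : x ^ 2 ≤ 1) :
    psi0 l x = 2 ^ ((3 : ℝ) / 2 + l) *
      (x ^ (l + 1) / √(1 - x ^ 2) * (1 / (1 + √(1 - x ^ 2))) ^ ((3 : ℝ) / 2 + l)) := by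
  have hinv : (1 - x ^ 2) ^ (-(1 / 2) : ℝ) = (√(1 - x ^ 2))⁻¹ := by
    rw [Real.sqrt_eq_rpow, Real.rpow_neg (by linarith)]
  rw [psi0, hinv, show 2 / (1 + √(1 - x ^ 2)) = 2 * (1 / (1 + √(1 - x ^ 2))) by ring,
    Real.mul_rpow zero_le_two (by positivity)]
  ring

theorem psi1_eq (l : ℕ) (x : ℝ) :
    psi1 l x = (3 + 2 * (l : ℝ))⁻¹ * (x ^ (l + 1) / √(1 - x ^ 2) *
      ((1 / (1 - √(1 - x ^ 2))) ^ ((3 : ℝ) / 2 + l) -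
        (1 / (1 + √(1 - x ^ 2))) ^ ((3 : ℝ) / 2 + l))) := by
  rw [psi1, one_div ((3 + _) * _), mul_inv]
  ring

theorem stmt_11 (l : ℕ) :
    ∀ ρ ∈ Set.Ioo (0 : ℝ) 1,
      psi0 l ρ * deriv (psi1 l) ρ - deriv (psi0 l) ρ * psi1 l ρ =
        -(2 : ℝ) ^ ((l : ℝ) + 3 / 2) / (ρ ^ 2 * (1 - ρ ^ 2) ^ ((3 : ℝ) / 2)) := by
  rintro ρ ⟨hρ0, hρ1⟩
  have hρ : ρ ^ 2 < 1 := by nlinarith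
  have hs : 0 < √(1 - ρ ^ 2) := Real.sqrt_pos.2 (by linarith)
  have hS := hasDerivAt_sqrt_one_sub_sq hρ
  have hpre : DifferentiableAt ℝ (fun x => x ^ (l + 1) / √(1 - x ^ 2)) ρ :=
    (differentiableAt_pow _).div hS.differentiableAt hs.ne'
  have hQ := (differentiableAt_one_div_one_add_sqrt hρ).rpow_const
    (p := (3 : ℝ) / 2 + l) (Or.inl (by positivity))
  have hP := (differentiableAt_one_div_one_sub_sqrt hρ0.ne' hρ).rpow_const
    (p := (3 : ℝ) / 2 + l) (Or.inl (one_div_pos.2 (sub_pos.2 (sqrt_one_sub_sq_lt_one hρ0.ne'))).ne')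
  have hnhds : {x : ℝ | x ^ 2 < 1} ∈ 𝓝 ρ :=
    (isOpen_lt (continuous_pow 2) continuous_const).mem_nhds hρ
  have hpsi0 := Filter.eventually_of_mem hnhds fun x (hx : x ^ 2 < 1) => psi0_eq l hx.le
  have hcube : (1 - ρ ^ 2) ^ ((3 : ℝ) / 2) = √(1 - ρ ^ 2) ^ 3 := by
    rw [Real.sqrt_eq_rpow, ← Real.rpow_mul_natCast (by linarith)]
    norm_num
  calc psi0 l ρ * deriv (psi1 l) ρ - deriv (psi0 l) ρ * psi1 l ρ
      = 2 ^ ((3 : ℝ) / 2 + l) * (3 + 2 * (l : ℝ))⁻¹ * ((ρ ^ (l + 1) / √(1 - ρ ^ 2)) ^ 2 *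
          (-(3 + 2 * l) / (ρ ^ (2 * l + 4) * √(1 - ρ ^ 2)))) := by
        rw [← wronskian, wronskian_congr hpsi0 (.of_eq (funext (psi1_eq l))), wronskian_const_mul,
          wronskian_mul_left hpre hQ (hP.fun_sub hQ), wronskian_sub_self hQ hP,
          wronskian_rpow_one_div_one_add_one_sub_sqrt l hρ0 hρ1]
    _ = -(2 : ℝ) ^ ((l : ℝ) + 3 / 2) / (ρ ^ 2 * (1 - ρ ^ 2) ^ ((3 : ℝ) / 2)) := by
        rw [hcube, add_comm (l : ℝ)]
        field_simp
        ring

end
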